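/- Let a ≥ 2 and let M₁, …, M_a ⊆ M₀ be pairwise disjoint, finite, nonempty, simple and bound sets such that Θ(Mᵢ, M̃ᵢ) = Θ(Mᵢ, Mᵢ₊₁) for every i ∈ {1, …, a−1} (as holds when each Mᵢ₊₁ is adjacent to Mᵢ), and such that Ξ(M₁) ≥ Ξ(Mⱼ) for all j ∈ {2, …, a−1}. Then Θ(M₁, M̃₁) ≥ Θ(Mᵢ, M̃ᵢ) for all i ∈ {2, …, a−1}. -/

import Mathlib

open Set Filter Metric
open scoped RealInnerProductSpace

noncomputable section

/-- Euclidean space `ℝ^d`. -/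
abbrev Eucl (d : ℕ) : Type := EuclideanSpace ℝ (Fin d)

/-- The communication height `Θ(x, y)` between two points. -/
def commHeight {d : ℕ} (U : Eucl d → ℝ) (x y : Eucl d) : ℝ :=
  ⨅ γ : Path x y, ⨆ t : unitInterval, U (γ t)

/-- The communication height `Θ(A, B)` between two sets, `+∞` if one is empty. -/
def commHeightSet {d : ℕ} (U : Eucl d → ℝ) (A B : Set (Eucl d)) : EReal :=
  ⨅ x ∈ A, ⨅ y ∈ B, (commHeight U x y : EReal)

/-- `M̃`: the local minima of `U` outside `M` of height at most `c = U(M)`. -/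
def tildeSet {d : ℕ} (U : Eucl d → ℝ) (M : Set (Eucl d)) (c : ℝ) : Set (Eucl d) :=
  {m' | IsLocalMin U m' ∧ m' ∉ M ∧ U m' ≤ c}

/-- `Ξ(M) = Θ(M, M̃) − U(M) ∈ (0, ∞]`. -/
def XiSet {d : ℕ} (U : Eucl d → ℝ) (M : Set (Eucl d)) (c : ℝ) : EReal :=
  commHeightSet U M (tildeSet U M c) - (c : EReal)

/-- `M` (simple, common value `c`) is bound. -/
def IsBound {d : ℕ} (U : Eucl d → ℝ) (M : Set (Eucl d)) (c : ℝ) : Prop :=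
  (∃ m, M = {m}) ∨
    ∀ m ∈ M, ∀ m' ∈ M, (commHeight U m m' : EReal) < commHeightSet U M (tildeSet U M c)

/-- `A` is a connected component of `S`. -/
def IsCompOf {d : ℕ} (S A : Set (Eucl d)) : Prop :=
  ∃ x ∈ S, A = connectedComponentIn S x

/-- The Hessian matrix of `U` at `x`. -/
def hessMat {d : ℕ} (U : Eucl d → ℝ) (x : Eucl d) : Matrix (Fin d) (Fin d) ℝ :=
  Matrix.of fun i j =>
    iteratedFDeriv ℝ 2 U x ![EuclideanSpace.single i (1 : ℝ), EuclideanSpace.single j (1 : ℝ)]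

/-- `σ` is a saddle point of `U`. -/
def IsSaddle {d : ℕ} (U : Eucl d → ℝ) (σ : Eucl d) : Prop :=
  gradient U σ = 0 ∧
    ∃ hH : (hessMat U σ).IsHermitian,
      IsUnit (hessMat U σ).det ∧ ∃! i, hH.eigenvalues i < 0

/-- `x ↷ y` : heteroclinic orbit of `ẋ = b(x)` from `x` to `y`. -/
def Hetero {d : ℕ} (b : Eucl d → Eucl d) (x y : Eucl d) : Prop :=
  ∃ φ : ℝ → Eucl d,
    (∀ t, HasDerivAt φ (b (φ t)) t) ∧
      Tendsto φ atBot (nhds x) ∧ Tendsto φ atTop (nhds y)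

/-- `σ ↝ m`. -/
def ConnectsTo {d : ℕ} (U : Eucl d → ℝ) (b : Eucl d → Eucl d) (σ m : Eucl d) : Prop :=
  Hetero b σ m ∨
    ∃ (k : ℕ) (_ : 0 < k) (σs : Fin k → Eucl d) (ms : Fin (k + 1) → Eucl d),
      (∀ i, IsSaddle U (σs i)) ∧ (∀ i, U (σs i) < U σ) ∧
        (∀ i : Fin k, IsLocalMin U (ms i.castSucc)) ∧
        ms (Fin.last k) = m ∧ Hetero b σ (ms 0) ∧
        ∀ i : Fin k, Hetero b (σs i) (ms i.castSucc) ∧ Hetero b (σs i) (ms i.succ)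

/-- `σ ↝ M`. -/
def ConnectsToSet {d : ℕ} (U : Eucl d → ℝ) (b : Eucl d → Eucl d) (σ : Eucl d)
    (M : Set (Eucl d)) : Prop :=
  ∃ m ∈ M, ConnectsTo U b σ m

/-- `σ ↷ M`. -/
def HeteroToSet {d : ℕ} (b : Eucl d → Eucl d) (σ : Eucl d) (M : Set (Eucl d)) : Prop :=
  ∃ m ∈ M, Hetero b σ m

/-- `M →_σ M'`. -/
def AdjacentVia {d : ℕ} (U : Eucl d → ℝ) (b : Eucl d → Eucl d) (M M' : Set (Eucl d))
    (c : ℝ) (σ : Eucl d) : Prop :=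
  IsSaddle U σ ∧ ConnectsToSet U b σ M ∧ HeteroToSet b σ M' ∧
    (U σ : EReal) = commHeightSet U M (tildeSet U M c) ∧
    (U σ : EReal) = commHeightSet U M M'

/-- Unstable-manifold property. -/
def UnstableManifoldProperty {d : ℕ} (U : Eucl d → ℝ) (b : Eucl d → Eucl d) : Prop :=
  ∀ σ : Eucl d, IsSaddle U σ →
    ∃ r' > (0 : ℝ), ∃ Ap Am : Set (Eucl d),
      Ap ≠ Am ∧
      IsCompOf (ball σ r' ∩ {x | U x < U σ}) Ap ∧
      IsCompOf (ball σ r' ∩ {x | U x < U σ}) Am ∧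
      (∀ C, IsCompOf (ball σ r' ∩ {x | U x < U σ}) C → C = Ap ∨ C = Am) ∧
      ∃ mp mm : Eucl d, IsLocalMin U mp ∧ IsLocalMin U mm ∧
        ∃ tp tm : ℝ, ∃ φp φm : ℝ → Eucl d,
          (∀ t, HasDerivAt φp (b (φp t)) t) ∧ (∀ t, HasDerivAt φm (b (φm t)) t) ∧
          Tendsto φp atBot (nhds σ) ∧ Tendsto φp atTop (nhds mp) ∧
          Tendsto φm atBot (nhds σ) ∧ Tendsto φm atTop (nhds mm) ∧
          φp '' Iic tp ⊆ Ap ∧ φm '' Iic tm ⊆ Am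

/-! Put `T = Θ(M₁, M̃₁)`. By induction along the chain, each `Mᵢ` (`i + 1 < a`) lies within
communication height `T` both of `M̃ᵢ` and of `M₁`. For `M₁` itself, boundedness gives this. In
the step, `Θ` is ultrametric (concatenate paths), `Mᵢ₊₁` is reached from `Mᵢ` at height
`Θ(Mᵢ, M̃ᵢ) ≤ T`, and points of the bound set `Mᵢ` communicate below that height, so
`Θ(Mᵢ₊₁, M₁) ≤ T`. Then either `U(Mᵢ₊₁) ≤ U(M₁)` and `Ξ(Mᵢ₊₁) ≤ Ξ(M₁)` gives
`Θ(Mᵢ₊₁, M̃ᵢ₊₁) ≤ T`, or `U(Mᵢ₊₁) > U(M₁)`, whence `M₁ ⊆ M̃ᵢ₊₁` and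
`Θ(Mᵢ₊₁, M̃ᵢ₊₁) ≤ Θ(Mᵢ₊₁, M₁) ≤ T`. -/

instance {X : Type*} [TopologicalSpace X] [PathConnectedSpace X] (x y : X) :
    Nonempty (Path x y) :=
  PathConnectedSpace.joined x y

section CommHeight

variable {d : ℕ} {U : Eucl d → ℝ}

lemma le_iSup_path (hU : Continuous U) {x y : Eucl d} (γ : Path x y) (t : unitInterval) :
    U (γ t) ≤ ⨆ s, U (γ s) :=
  le_ciSup (isCompact_range (hU.comp γ.continuous)).bddAbove t

lemma commHeight_le_iSup_path (hU : Continuous U) {x y : Eucl d} (γ : Path x y) :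
    commHeight U x y ≤ ⨆ t, U (γ t) :=
  ciInf_le ⟨U x, by rintro _ ⟨γ', rfl⟩; simpa using le_iSup_path hU γ' 0⟩ γ

lemma le_commHeight_left (hU : Continuous U) (x y : Eucl d) : U x ≤ commHeight U x y :=
  le_ciInf fun γ => by simpa using le_iSup_path hU γ 0

lemma commHeight_self (hU : Continuous U) (x : Eucl d) : commHeight U x x = U x :=
  le_antisymm (by simpa using commHeight_le_iSup_path hU (Path.refl x))
    (le_commHeight_left hU x x)

lemma commHeight_comm (hU : Continuous U) (x y : Eucl d) :
    commHeight U x y = commHeight U y x := by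
  have key : ∀ x y : Eucl d, commHeight U x y ≤ commHeight U y x := fun x y =>
    le_ciInf fun γ => (commHeight_le_iSup_path hU γ.symm).trans_eq
      (unitInterval.symm_bijective.surjective.iSup_comp fun t => U (γ t))
  exact le_antisymm (key x y) (key y x)

lemma commHeight_le_max (hU : Continuous U) (x y z : Eucl d) :
    commHeight U x z ≤ max (commHeight U x y) (commHeight U y z) := by
  by_contra! h
  obtain ⟨γ₁, h₁⟩ := exists_lt_of_ciInf_lt ((le_max_left _ _).trans_lt h)
  obtain ⟨γ₂, h₂⟩ := exists_lt_of_ciInf_lt ((le_max_right _ _).trans_lt h)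
  have hsup : ⨆ t, U ((γ₁.trans γ₂) t) ≤ max (⨆ t, U (γ₁ t)) (⨆ t, U (γ₂ t)) := by
    refine ciSup_le fun t => ?_
    have ht : (γ₁.trans γ₂) t ∈ range γ₁ ∪ range γ₂ := Path.trans_range γ₁ γ₂ ▸ ⟨t, rfl⟩
    rcases ht with ⟨s, hs⟩ | ⟨s, hs⟩
    · exact le_max_of_le_left (hs ▸ le_iSup_path hU γ₁ s)
    · exact le_max_of_le_right (hs ▸ le_iSup_path hU γ₂ s)
  exact ((commHeight_le_iSup_path hU _).trans hsup).not_gt (max_lt h₁ h₂)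

end CommHeight

section CommHeightSet

variable {d : ℕ} {U : Eucl d → ℝ} {A B C : Set (Eucl d)}

lemma commHeightSet_le_commHeight {x y : Eucl d} (hx : x ∈ A) (hy : y ∈ B) :
    commHeightSet U A B ≤ commHeight U x y :=
  (iInf₂_le x hx).trans (iInf₂_le y hy)

lemma le_commHeightSet {t : EReal} (h : ∀ x ∈ A, ∀ y ∈ B, t ≤ commHeight U x y) :
    t ≤ commHeightSet U A B :=
  le_iInf₂ fun x hx => le_iInf₂ fun y hy => h x hx y hy

lemma commHeightSet_anti_right (h : C ⊆ B) : commHeightSet U A B ≤ commHeightSet U A C :=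
  le_commHeightSet fun _ hx _ hy => commHeightSet_le_commHeight hx (h hy)

lemma coe_le_commHeightSet (hU : Continuous U) {c : ℝ} (hc : ∀ x ∈ A, c ≤ U x) :
    (c : EReal) ≤ commHeightSet U A B :=
  le_commHeightSet fun x hx y _ => EReal.coe_le_coe (hc x hx |>.trans (le_commHeight_left hU x y))

lemma commHeightSet_comm (hU : Continuous U) (A B : Set (Eucl d)) :
    commHeightSet U A B = commHeightSet U B A := by
  have key : ∀ A B : Set (Eucl d), commHeightSet U A B ≤ commHeightSet U B A :=
    fun _ _ => le_commHeightSet fun y hy x hx =>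
      commHeight_comm hU y x ▸ commHeightSet_le_commHeight hx hy
  exact le_antisymm (key A B) (key B A)

lemma exists_commHeightSet_eq (hA : A.Finite) (hA' : A.Nonempty) (hB : B.Finite)
    (hB' : B.Nonempty) : ∃ x ∈ A, ∃ y ∈ B, commHeightSet U A B = commHeight U x y := by
  obtain ⟨p, hp, hmin⟩ := exists_min_image (A ×ˢ B) (fun p => commHeight U p.1 p.2)
    (hA.prod hB) (hA'.prod hB')
  exact ⟨p.1, hp.1, p.2, hp.2, le_antisymm (commHeightSet_le_commHeight hp.1 hp.2)
    (le_commHeightSet fun x hx y hy => EReal.coe_le_coe (hmin (x, y) ⟨hx, hy⟩))⟩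

lemma commHeightSet_le_via (hU : Continuous U) (hA : A.Finite) (hA' : A.Nonempty)
    (hB : B.Finite) (hB' : B.Nonempty) (hC : C.Finite) (hC' : C.Nonempty) {t : EReal}
    (hAB : commHeightSet U A B ≤ t) (hBB : ∀ b ∈ B, ∀ b' ∈ B, commHeight U b b' ≤ t)
    (hBC : commHeightSet U B C ≤ t) : commHeightSet U A C ≤ t := by
  obtain ⟨x, hx, b, hb, hxb⟩ := exists_commHeightSet_eq (U := U) hA hA' hB hB'
  obtain ⟨b', hb', z, hz, hb'z⟩ := exists_commHeightSet_eq (U := U) hB hB' hC hC'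
  calc commHeightSet U A C ≤ commHeight U x z := commHeightSet_le_commHeight hx hz
    _ ≤ max (commHeight U x b : EReal) (max (commHeight U b b') (commHeight U b' z)) := by
      simp only [← EReal.coe_strictMono.monotone.map_max]
      exact EReal.coe_le_coe <| (commHeight_le_max hU x b z).trans
        (max_le_max le_rfl (commHeight_le_max hU b b' z))
    _ ≤ t := max_le (hxb ▸ hAB) (max_le (hBB b hb b' hb') (hb'z ▸ hBC))

end CommHeightSet

section SimpleSets

variable {d : ℕ} {U : Eucl d → ℝ} {M M' : Set (Eucl d)} {c c' : ℝ}

lemma IsBound.commHeight_le (hU : Continuous U) (hM : IsBound U M c) (hc : ∀ m ∈ M, U m = c)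
    {m m' : Eucl d} (hm : m ∈ M) (hm' : m' ∈ M) :
    commHeight U m m' ≤ commHeightSet U M (tildeSet U M c) := by
  rcases hM with ⟨m₀, rfl⟩ | hM
  · obtain ⟨rfl, rfl⟩ : m = m₀ ∧ m' = m₀ := ⟨hm, hm'⟩
    rw [commHeight_self hU, hc _ hm]
    exact coe_le_commHeightSet hU fun x hx => (hc x hx).ge
  · exact (hM m hm m' hm').le

lemma subset_tildeSet (hloc : ∀ m ∈ M', IsLocalMin U m) (hdisj : Disjoint M' M)
    (hle : ∀ m ∈ M', U m ≤ c) : M' ⊆ tildeSet U M c :=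
  fun m hm => ⟨hloc m hm, hdisj.notMem_of_mem_left hm, hle m hm⟩

lemma commHeightSet_tildeSet_le_of_xiSet_le (hcc' : c' ≤ c)
    (hXi : XiSet U M' c' ≤ XiSet U M c) :
    commHeightSet U M' (tildeSet U M' c') ≤ commHeightSet U M (tildeSet U M c) :=
  calc commHeightSet U M' (tildeSet U M' c') = XiSet U M' c' + c' := EReal.sub_add_cancel.symm
    _ ≤ XiSet U M c + c := add_le_add hXi (EReal.coe_le_coe hcc')
    _ = commHeightSet U M (tildeSet U M c) := EReal.sub_add_cancel

end SimpleSets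

theorem statement5 {d : ℕ}
    (U : Eucl d → ℝ) (hUc : Continuous U)
    (a : ℕ) (ha : 2 ≤ a)
    (ms : Fin a → Set (Eucl d)) (cs : Fin a → ℝ)
    (hdisj : ∀ i j, i ≠ j → Disjoint (ms i) (ms j))
    (hfin : ∀ i, (ms i).Finite) (hne : ∀ i, (ms i).Nonempty)
    (hloc : ∀ i, ∀ m ∈ ms i, IsLocalMin U m)
    (hsimple : ∀ i, ∀ m ∈ ms i, U m = cs i)
    (hbound : ∀ i, IsBound U (ms i) (cs i))
    (hadj : ∀ i : Fin a, (hia : i.1 + 1 < a) →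
      commHeightSet U (ms i) (tildeSet U (ms i) (cs i)) =
        commHeightSet U (ms i) (ms ⟨i.1 + 1, hia⟩))
    (hXi : ∀ j : Fin a, 1 ≤ j.1 → j.1 + 1 < a →
      XiSet U (ms j) (cs j) ≤ XiSet U (ms ⟨0, by omega⟩) (cs ⟨0, by omega⟩))
 :
    ∀ i : Fin a, 1 ≤ i.1 → i.1 + 1 < a →
      commHeightSet U (ms i) (tildeSet U (ms i) (cs i)) ≤
        commHeightSet U (ms ⟨0, by omega⟩)
          (tildeSet U (ms ⟨0, by omega⟩) (cs ⟨0, by omega⟩)) := by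
  intro i _ hi
  set i₀ : Fin a := ⟨0, by omega⟩
  set T := commHeightSet U (ms i₀) (tildeSet U (ms i₀) (cs i₀))
  suffices key : ∀ n (hn : n + 1 < a),
      commHeightSet U (ms ⟨n, by omega⟩) (tildeSet U (ms ⟨n, by omega⟩) (cs ⟨n, by omega⟩)) ≤ T ∧
        commHeightSet U (ms ⟨n, by omega⟩) (ms i₀) ≤ T from (key i hi).1
  intro n
  induction n with
  | zero =>
    intro _
    obtain ⟨m, hm⟩ := hne i₀
    exact ⟨le_rfl, (commHeightSet_le_commHeight hm hm).trans
      ((hbound i₀).commHeight_le hUc (hsimple i₀) hm hm)⟩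
  | succ n ih =>
    intro hn
    obtain ⟨hT, h0⟩ := ih (by omega)
    have hstep : commHeightSet U (ms ⟨n + 1, by omega⟩) (ms ⟨n, by omega⟩) ≤ T := by
      rw [commHeightSet_comm hUc, ← hadj ⟨n, by omega⟩ (show n + 1 < a by omega)]
      exact hT
    have hnext : commHeightSet U (ms ⟨n + 1, by omega⟩) (ms i₀) ≤ T :=
      commHeightSet_le_via hUc (hfin _) (hne _) (hfin _) (hne _) (hfin _) (hne _) hstep
        (fun b hb b' hb' => ((hbound _).commHeight_le hUc (hsimple _) hb hb').trans hT) h0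
    refine ⟨?_, hnext⟩
    rcases le_or_gt (cs ⟨n + 1, by omega⟩) (cs i₀) with hc | hc
    · exact commHeightSet_tildeSet_le_of_xiSet_le hc (hXi _ (by simp) hn)
    · refine (commHeightSet_anti_right (subset_tildeSet (hloc i₀) (hdisj _ _ ?_)
        fun m hm => (hsimple i₀ m hm).trans_le hc.le)).trans hnext
      simp [i₀, Fin.ext_iff]

end
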